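/- Let d = 2m+1 be odd with d ≥ 3, and define facets σ_1, …, σ_{2d} of ∂C_d^* (indices mod 2d) by σ_{2k−1} = τ_m^k and σ_{2k} = τ_{m+1}^k for 1 ≤ k ≤ d. Then: (i) |σ_i ∩ σ_{i+1}| = d−1 for all i; (ii) σ_{i+d} = α(σ_i) for all i; (iii) the σ_i are pairwise distinct and {σ_1, …, σ_{2d}} is exactly the set of facets of Γ_m ∪ Γ_{m+1}; and (iv) for any i ≠ j, |σ_i ∩ σ_j| = d−1 implies j ≡ i ± 1 (mod 2d), i.e., the facet-ridge graph of Γ_m ∪ Γ_{m+1} is a 2d-cycle. -/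
import Mathlib


namespace SpherePaper

/-- Vertices of `∂C_d^*`: `(i, false)` plays the role of `x_i` and `(i, true)` of `y_i`,
with the cyclic index convention `x_{d+k} = x_k` built in via `ZMod d`. -/
abbrev Vtx (d : ℕ) := ZMod d × Bool

/-- The vertex `x_k`. -/
def xv (d k : ℕ) : Vtx d := ((k : ZMod d), false)

/-- The vertex `y_k`. -/
def yv (d k : ℕ) : Vtx d := ((k : ZMod d), true)

/-- The antipodal map `α`, sending `x_k ↦ y_k` and `y_k ↦ x_k`. -/
def alphaV (d : ℕ) (v : Vtx d) : Vtx d := (v.1, !v.2)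

/-- The facet `τ_j^k = {y_k, …, y_{k+j-1}} ∪ {x_{k+j}, …, x_{k+d-1}}` of `∂C_d^*`. -/
def tau (d j k : ℕ) : Finset (Vtx d) :=
  (Finset.range d).image fun t => (((k + t : ℕ) : ZMod d), decide (t < j))

/-- The complex `Γ_j` generated by the facets `τ_j^k`, `1 ≤ k ≤ d`. -/
def Gamma (d j : ℕ) : Set (Finset (Vtx d)) :=
  {F | ∃ k, 1 ≤ k ∧ k ≤ d ∧ F ⊆ tau d j k}

/-- The `n`-th facet `σ_n` of `B(1,d)` (indices read periodically mod `2d`):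
`σ_i = {x_1,…,x_i, y_{i+1},…,y_d}` and `σ_{d+i} = {y_1,…,y_i, x_{i+1},…,x_d}`
for `1 ≤ i ≤ d`. -/
def sigB (d n : ℕ) : Finset (Vtx d) :=
  if (n - 1) % (2 * d) + 1 ≤ d then
    (Finset.range d).image fun t =>
      (((t + 1 : ℕ) : ZMod d), decide ((n - 1) % (2 * d) + 1 < t + 1))
  else
    (Finset.range d).image fun t =>
      (((t + 1 : ℕ) : ZMod d), decide (t + 1 ≤ (n - 1) % (2 * d) + 1 - d))

/-- `F` is a facet (an inclusion-maximal face) of the complex `C`. -/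
def IsFacetOf {α : Type*} (C : Set (Finset α)) (F : Finset α) : Prop :=
  F ∈ C ∧ ∀ G ∈ C, F ⊆ G → F = G

section Aux
open Finset

variable {d : ℕ} [NeZero d]

def gfun (d j k : ℕ) (a : ZMod d) : Bool := decide ((a - (k : ZMod d)).val < j)

lemma mem_tau {j k : ℕ} {v : Vtx d} : v ∈ tau d j k ↔ v.2 = gfun d j k v.1 := by
  obtain ⟨a, b⟩ := v
  simp only [tau, mem_image, mem_range, gfun, Prod.ext_iff]
  constructor
  · rintro ⟨t, ht, h1, h2⟩
    have ha : a - (k : ZMod d) = ((t : ℕ) : ZMod d) := by rw [← h1]; push_cast; ring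
    rw [ha, ZMod.val_natCast, Nat.mod_eq_of_lt ht, ← h2]
  · intro hb
    refine ⟨(a - (k : ZMod d)).val, ZMod.val_lt _, ?_, ?_⟩
    · push_cast
      rw [ZMod.natCast_val, ZMod.cast_id]
      ring
    · exact hb.symm

lemma tau_eq_image (j k : ℕ) :
    tau d j k = Finset.univ.image (fun a : ZMod d => (a, gfun d j k a)) := by
  ext ⟨a, b⟩
  simp [mem_tau, eq_comm]

lemma card_tau (j k : ℕ) : (tau d j k).card = d := by
  rw [tau_eq_image, Finset.card_image_of_injective _
    (fun x y h => (Prod.ext_iff.mp h).1), card_univ, ZMod.card]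

lemma inter_tau_card (j1 k1 j2 k2 : ℕ) :
    (tau d j1 k1 ∩ tau d j2 k2).card
      = (univ.filter fun a : ZMod d => gfun d j1 k1 a = gfun d j2 k2 a).card := by
  have hset : tau d j1 k1 ∩ tau d j2 k2
      = (univ.filter fun a : ZMod d => gfun d j1 k1 a = gfun d j2 k2 a).image
          (fun a => (a, gfun d j1 k1 a)) := by
    ext ⟨a, b⟩
    simp only [mem_inter, mem_tau, mem_image, mem_filter, mem_univ, true_and, Prod.ext_iff]
    constructor
    · rintro ⟨h1, h2⟩; exact ⟨a, by rw [← h1, ← h2], rfl, h1.symm⟩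
    · rintro ⟨x, hx, rfl, rfl⟩; exact ⟨rfl, hx⟩
  rw [hset, Finset.card_image_of_injective _ (fun x y h => (Prod.ext_iff.mp h).1)]

lemma tau_eq_iff {j1 k1 j2 k2 : ℕ} :
    tau d j1 k1 = tau d j2 k2 ↔ ∀ a : ZMod d, gfun d j1 k1 a = gfun d j2 k2 a := by
  constructor
  · intro h a
    have hmem : ((a, gfun d j1 k1 a) : Vtx d) ∈ tau d j2 k2 := by
      rw [← h]; exact mem_tau.mpr rfl
    simpa [mem_tau] using hmem
  · intro h; ext v; rw [mem_tau, mem_tau, h]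

lemma tau_congr {j k1 k2 : ℕ} (h : (k1 : ZMod d) = (k2 : ZMod d)) :
    tau d j k1 = tau d j k2 := by
  apply tau_eq_iff.mpr; intro a; simp [gfun, h]

lemma val_sub_sub (a : ZMod d) (k1 k2 : ℕ) :
    (a - (k2 : ZMod d)).val
      = ((a - (k1 : ZMod d)).val + ((k1 : ZMod d) - (k2 : ZMod d)).val) % d := by
  rw [show a - (k2 : ZMod d) = (a - (k1 : ZMod d)) + ((k1 : ZMod d) - (k2 : ZMod d)) by ring,
    ZMod.val_add]

lemma val_self_shift (k t : ℕ) (ht : t < d) :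
    (((k : ZMod d) + (t : ℕ)) - (k : ZMod d)).val = t := by
  rw [add_sub_cancel_left, ZMod.val_natCast, Nat.mod_eq_of_lt ht]

lemma val_shift (k1 k2 t : ℕ) (ht : t < d) :
    (((k1 : ZMod d) + (t : ℕ)) - (k2 : ZMod d)).val
      = (t + ((k1 : ZMod d) - (k2 : ZMod d)).val) % d := by
  rw [val_sub_sub _ k1 k2, val_self_shift k1 t ht]

lemma card_gfun_true {j k : ℕ} (hj : j ≤ d) :
    (univ.filter fun a : ZMod d => gfun d j k a = true).card = j := by
  have himg : (univ.filter fun a : ZMod d => gfun d j k a = true)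
      = (Finset.range j).image (fun t : ℕ => (k : ZMod d) + (t : ℕ)) := by
    ext a
    simp only [mem_filter, mem_univ, true_and, mem_image, mem_range, gfun,
      decide_eq_true_eq]
    constructor
    · intro h
      refine ⟨(a - (k : ZMod d)).val, h, ?_⟩
      rw [ZMod.natCast_val, ZMod.cast_id]; ring
    · rintro ⟨t, ht, rfl⟩
      rw [val_self_shift k t (lt_of_lt_of_le ht hj)]
      exact ht
  rw [himg, Finset.card_image_of_injOn, Finset.card_range]
  intro x hx y hy hxy
  simp only [coe_range, Set.mem_Iio] at hx hy
  have hc : (x : ZMod d) = (y : ZMod d) := add_left_cancel hxy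
  have hv := congrArg ZMod.val hc
  rwa [ZMod.val_natCast, ZMod.val_natCast, Nat.mod_eq_of_lt (lt_of_lt_of_le hx hj),
    Nat.mod_eq_of_lt (lt_of_lt_of_le hy hj)] at hv

lemma disagree_card (j1 k1 j2 k2 : ℕ) :
    (tau d j1 k1 ∩ tau d j2 k2).card
      + (univ.filter fun a : ZMod d => ¬ (gfun d j1 k1 a = gfun d j2 k2 a)).card = d := by
  rw [inter_tau_card,
    Finset.card_filter_add_card_filter_not
      (p := fun a : ZMod d => gfun d j1 k1 a = gfun d j2 k2 a),
    card_univ, ZMod.card]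

lemma disagree_L1 {m k : ℕ} (hd : d = 2*m+1) :
    (univ.filter fun a : ZMod d => ¬ (gfun d m k a = gfun d (m+1) k a)).card = 1 := by
  have hsingle : (univ.filter fun a : ZMod d => ¬ (gfun d m k a = gfun d (m+1) k a))
      = {((k + m : ℕ) : ZMod d)} := by
    ext a
    simp only [mem_filter, mem_univ, true_and, mem_singleton, gfun, decide_eq_decide]
    have hv := ZMod.val_lt (a - (k : ZMod d))
    constructor
    · intro h
      have hm : (a - (k : ZMod d)).val = m := by
        by_contra hne
        exact h ⟨fun h1 => by omega, fun h1 => by omega⟩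
      have he : a - (k : ZMod d) = ((m : ℕ) : ZMod d) := by
        rw [← hm, ZMod.natCast_val, ZMod.cast_id]
      push_cast
      rw [← he]; ring
    · rintro rfl
      rw [Nat.cast_add, val_self_shift k m (by omega)]
      intro hiff
      exact absurd (hiff.mpr (by omega)) (by omega)
  rw [hsingle, Finset.card_singleton]

lemma disagree_L2 {m k : ℕ} (hd : d = 2*m+1) (hm : 1 ≤ m) :
    (univ.filter fun a : ZMod d => ¬ (gfun d (m+1) k a = gfun d m (k+1) a)).card = 1 := by
  have hsv : ((k : ZMod d) - ((k+1 : ℕ) : ZMod d)).val = d - 1 := by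
    have hs : (k : ZMod d) - ((k+1 : ℕ) : ZMod d) = ((d - 1 : ℕ) : ZMod d) := by
      rw [Nat.cast_sub (by omega : 1 ≤ d), ZMod.natCast_self]
      push_cast; ring
    rw [hs, ZMod.val_natCast, Nat.mod_eq_of_lt (by omega)]
  have hsingle : (univ.filter fun a : ZMod d => ¬ (gfun d (m+1) k a = gfun d m (k+1) a))
      = {((k : ℕ) : ZMod d)} := by
    ext a
    simp only [mem_filter, mem_univ, true_and, mem_singleton, gfun, decide_eq_decide]
    have hv := ZMod.val_lt (a - (k : ZMod d))
    have hw := val_sub_sub a k (k+1)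
    rw [hsv] at hw
    constructor
    · intro h
      have hv0 : (a - (k : ZMod d)).val = 0 := by
        by_contra h0
        apply h
        have hw' : (a - ((k+1 : ℕ) : ZMod d)).val = (a - (k : ZMod d)).val - 1 := by
          rw [hw, show (a - (k : ZMod d)).val + (d-1) = ((a - (k : ZMod d)).val - 1) + d
              by omega, Nat.add_mod_right, Nat.mod_eq_of_lt (by omega)]
        rw [hw']
        constructor <;> intro <;> omega
      have hz : a - (k : ZMod d) = 0 := by rwa [← ZMod.val_eq_zero]
      have := sub_eq_zero.mp hz
      exact this
    · rintro rfl
      rw [sub_self, ZMod.val_zero, hsv]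
      intro hiff
      have := hiff.mp (by omega)
      omega
  rw [hsingle, Finset.card_singleton]

lemma disagree_card_even {f g : ZMod d → Bool}
    (h : (univ.filter fun a => f a = true).card = (univ.filter fun a => g a = true).card) :
    (univ.filter fun a => ¬ (f a = g a)).card ≠ 1 := by
  classical
  set A := univ.filter (fun a : ZMod d => f a = true) with hA
  set B := univ.filter (fun a : ZMod d => g a = true) with hB
  have hD : (univ.filter fun a => ¬ (f a = g a)) = (A \ B) ∪ (B \ A) := by
    ext a
    simp only [mem_filter, mem_univ, true_and, mem_union, mem_sdiff, hA, hB]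
    cases hfa : f a <;> cases hga : g a <;> simp
  have h1 := Finset.card_sdiff_add_card_inter A B
  have h2 := Finset.card_sdiff_add_card_inter B A
  rw [Finset.inter_comm] at h2
  rw [hD, Finset.card_union_of_disjoint disjoint_sdiff_sdiff]
  omega

lemma subset_of_disagree_one {m k1 k2 : ℕ} (hd : d = 2*m+1) (hm : 1 ≤ m)
    (h : (univ.filter fun a : ZMod d => ¬ (gfun d m k1 a = gfun d (m+1) k2 a)).card = 1) :
    (k1 : ZMod d) = (k2 : ZMod d) ∨ (k1 : ZMod d) = (k2 : ZMod d) + 1 := by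
  classical
  set A := univ.filter (fun a : ZMod d => gfun d m k1 a = true) with hA
  set B := univ.filter (fun a : ZMod d => gfun d (m+1) k2 a = true) with hB
  have hcA : A.card = m := card_gfun_true (by omega)
  have hcB : B.card = m + 1 := card_gfun_true (by omega)
  have hD : (univ.filter fun a : ZMod d => ¬ (gfun d m k1 a = gfun d (m+1) k2 a))
      = (A \ B) ∪ (B \ A) := by
    ext a
    simp only [mem_filter, mem_univ, true_and, mem_union, mem_sdiff, hA, hB]
    cases hfa : gfun d m k1 a <;> cases hga : gfun d (m+1) k2 a <;> simp
  have h1 := Finset.card_sdiff_add_card_inter A B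
  have h2 := Finset.card_sdiff_add_card_inter B A
  rw [Finset.inter_comm] at h2
  rw [hD, Finset.card_union_of_disjoint disjoint_sdiff_sdiff] at h
  have hAB : A ⊆ B := by
    rw [← Finset.sdiff_eq_empty_iff_subset, ← Finset.card_eq_zero]; omega
  set s := ((k1 : ZMod d) - (k2 : ZMod d)).val with hs
  have hslt : s < d := ZMod.val_lt _
  have hsub : ∀ t : ℕ, t < m → (t + s) % d < m + 1 := by
    intro t ht
    have hmem : ((k1 : ZMod d) + (t : ℕ)) ∈ A := by
      simp only [hA, mem_filter, mem_univ, true_and, gfun, decide_eq_true_eq]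
      rw [val_self_shift k1 t (by omega)]
      exact ht
    have hB' := hAB hmem
    simp only [hB, mem_filter, mem_univ, true_and, gfun, decide_eq_true_eq] at hB'
    rwa [val_shift k1 k2 t (by omega), ← hs] at hB'
  rcases Nat.lt_or_ge s 2 with hs2 | hs2
  · rcases Nat.eq_zero_or_pos s with hs0 | hs1
    · left
      have hz : (k1 : ZMod d) - (k2 : ZMod d) = 0 := by
        rw [← ZMod.val_eq_zero, ← hs]; exact hs0
      exact sub_eq_zero.mp hz
    · right
      have hone : s = 1 := by omega
      have hx : (k1 : ZMod d) - (k2 : ZMod d) = ((s : ℕ) : ZMod d) := by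
        rw [hs, ZMod.natCast_val, ZMod.cast_id]
      rw [hone] at hx
      rw [sub_eq_iff_eq_add] at hx
      rw [hx]; push_cast; ring
  · exfalso
    rcases Nat.lt_or_ge s (m+1) with hsm | hsm
    · have := hsub (m+1-s) (by omega)
      rw [show (m+1-s) + s = m+1 by omega, Nat.mod_eq_of_lt (by omega)] at this
      omega
    · have := hsub 0 (by omega)
      rw [Nat.zero_add, Nat.mod_eq_of_lt hslt] at this
      omega

lemma cast_eq_of_gfun_eq {j k1 k2 : ℕ} (hj1 : 1 ≤ j) (hjd : j < d)
    (h : ∀ a : ZMod d, gfun d j k1 a = gfun d j k2 a) :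
    (k1 : ZMod d) = (k2 : ZMod d) := by
  set s := ((k1 : ZMod d) - (k2 : ZMod d)).val with hs
  have hslt : s < d := ZMod.val_lt _
  have h0 := h (k1 : ZMod d)
  simp only [gfun, decide_eq_decide] at h0
  rw [sub_self, ZMod.val_zero] at h0
  have hsj : s < j := by rw [hs]; exact h0.mp hj1
  rcases Nat.eq_zero_or_pos s with hs0 | hs1
  · have hz : (k1 : ZMod d) - (k2 : ZMod d) = 0 := by
      rw [← ZMod.val_eq_zero, ← hs]; exact hs0
    exact sub_eq_zero.mp hz
  · exfalso
    have ha := h ((k1 : ZMod d) + ((j - s : ℕ) : ZMod d))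
    simp only [gfun, decide_eq_decide] at ha
    rw [val_self_shift k1 (j-s) (by omega), val_shift k1 k2 (j-s) (by omega), ← hs,
      show (j - s) + s = j by omega, Nat.mod_eq_of_lt hjd] at ha
    omega

lemma gfun_compl (j k : ℕ) (hj1 : 1 ≤ j) (hjd : j < d) (a : ZMod d) :
    (!gfun d j k a) = gfun d (d - j) (k + j) a := by
  simp only [gfun]
  have hv := ZMod.val_lt (a - (k : ZMod d))
  have hshift : (a - ((k + j : ℕ) : ZMod d)).val
      = ((a - (k : ZMod d)).val + (d - j)) % d := by
    rw [val_sub_sub a k (k + j)]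
    have he : (k : ZMod d) - ((k + j : ℕ) : ZMod d) = ((d - j : ℕ) : ZMod d) := by
      rw [Nat.cast_sub (le_of_lt hjd), ZMod.natCast_self]; push_cast; ring
    have hdj : ((d - j : ℕ) : ZMod d).val = d - j := by
      rw [ZMod.val_natCast]; exact Nat.mod_eq_of_lt (by omega)
    rw [he, hdj]
  rw [hshift]
  rcases Nat.lt_or_ge (a - (k : ZMod d)).val j with h | h
  · rw [Nat.mod_eq_of_lt (by omega)]
    have h2 : ¬ ((a - (k : ZMod d)).val + (d - j) < d - j) := by omega
    simp [h, h2]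
  · rw [show (a - (k : ZMod d)).val + (d - j) = ((a - (k : ZMod d)).val - j) + d by omega,
      Nat.add_mod_right, Nat.mod_eq_of_lt (by omega)]
    have h1 : ¬ ((a - (k : ZMod d)).val < j) := by omega
    have h2 : (a - (k : ZMod d)).val - j < d - j := by omega
    simp [h1, h2]

lemma image_alpha_tau (j k : ℕ) (hj1 : 1 ≤ j) (hjd : j < d) :
    (tau d j k).image (alphaV d) = tau d (d - j) (k + j) := by
  ext v
  constructor
  · intro hv
    obtain ⟨w, hw, rfl⟩ := Finset.mem_image.mp hv
    rw [mem_tau] at hw ⊢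
    show (!w.2) = gfun d (d - j) (k + j) w.1
    rw [hw, gfun_compl j k hj1 hjd]
  · intro hv
    rw [mem_tau] at hv
    refine Finset.mem_image.mpr ⟨(v.1, !v.2), ?_, ?_⟩
    · rw [mem_tau]
      show (!v.2) = gfun d j k v.1
      rw [hv, ← gfun_compl j k hj1 hjd v.1, Bool.not_not]
    · show (v.1, !!v.2) = v
      rw [Bool.not_not]

lemma natCast_inj_Icc {k1 k2 : ℕ} (h11 : 1 ≤ k1) (h1d : k1 ≤ d) (h21 : 1 ≤ k2)
    (h2d : k2 ≤ d) (h : (k1 : ZMod d) = (k2 : ZMod d)) : k1 = k2 := by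
  have hv : k1 % d = k2 % d := by
    have := congrArg ZMod.val h
    rwa [ZMod.val_natCast, ZMod.val_natCast] at this
  rcases Nat.lt_or_ge k1 d with h1 | h1 <;> rcases Nat.lt_or_ge k2 d with h2 | h2
  · rwa [Nat.mod_eq_of_lt h1, Nat.mod_eq_of_lt h2] at hv
  · have hk2 : k2 = d := by omega
    subst hk2
    rw [Nat.mod_eq_of_lt h1, Nat.mod_self] at hv; omega
  · have hk1 : k1 = d := by omega
    subst hk1
    rw [Nat.mod_self, Nat.mod_eq_of_lt h2] at hv; omega
  · omega

end Aux

open Finset in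
/-- Let `d = 2m+1` be odd, `d ≥ 3`, and define the facets
`σ_{2k-1} = τ_m^k`, `σ_{2k} = τ_{m+1}^k` for `1 ≤ k ≤ d` (indices mod `2d`, encoded by
periodicity). Then: (i) `|σ_i ∩ σ_{i+1}| = d-1`; (ii) `σ_{i+d} = α(σ_i)`; (iii) the `σ_i`
are pairwise distinct and are exactly the facets of `Γ_m ∪ Γ_{m+1}`; (iv) `|σ_i ∩ σ_j| = d-1`
with `i ≠ j` forces `j ≡ i ± 1 (mod 2d)`, i.e. the facet-ridge graph is a `2d`-cycle. -/
theorem statement4 (m : ℕ) (hm : 1 ≤ m)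
    (σ : ℕ → Finset (Vtx (2 * m + 1)))
    (hper : ∀ i, σ (i + 2 * (2 * m + 1)) = σ i)
    (hodd : ∀ k, 1 ≤ k → k ≤ 2 * m + 1 → σ (2 * k - 1) = tau (2 * m + 1) m k)
    (heven : ∀ k, 1 ≤ k → k ≤ 2 * m + 1 → σ (2 * k) = tau (2 * m + 1) (m + 1) k) :
    (∀ i, 1 ≤ i → i ≤ 2 * (2 * m + 1) → (σ i ∩ σ (i + 1)).card = 2 * m) ∧
    (∀ i, 1 ≤ i → i ≤ 2 * (2 * m + 1) →
      σ (i + (2 * m + 1)) = (σ i).image (alphaV (2 * m + 1))) ∧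
    (∀ i j, 1 ≤ i → i ≤ 2 * (2 * m + 1) → 1 ≤ j → j ≤ 2 * (2 * m + 1) →
      σ i = σ j → i = j) ∧
    (∀ F : Finset (Vtx (2 * m + 1)),
      (∃ i, 1 ≤ i ∧ i ≤ 2 * (2 * m + 1) ∧ F = σ i) ↔
        IsFacetOf (Gamma (2 * m + 1) m ∪ Gamma (2 * m + 1) (m + 1)) F) ∧
    (∀ i j, 1 ≤ i → i ≤ 2 * (2 * m + 1) → 1 ≤ j → j ≤ 2 * (2 * m + 1) → i ≠ j →
      (σ i ∩ σ j).card = 2 * m →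
      (j % (2 * (2 * m + 1)) = (i + 1) % (2 * (2 * m + 1)) ∨
        i % (2 * (2 * m + 1)) = (j + 1) % (2 * (2 * m + 1)))) := by
  have hform : ∀ i, 1 ≤ i → i ≤ 2*(2*m+1) →
      (∃ k, 1 ≤ k ∧ k ≤ 2*m+1 ∧ i = 2*k - 1 ∧ σ i = tau (2*m+1) m k) ∨
      (∃ k, 1 ≤ k ∧ k ≤ 2*m+1 ∧ i = 2*k ∧ σ i = tau (2*m+1) (m+1) k) := by
    intro i hi1 hi2
    rcases Nat.even_or_odd i with ⟨k, hk⟩ | ⟨k, hk⟩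
    · right
      refine ⟨k, by omega, by omega, by omega, ?_⟩
      rw [show i = 2*k by omega]
      exact heven k (by omega) (by omega)
    · left
      refine ⟨k+1, by omega, by omega, by omega, ?_⟩
      rw [show i = 2*(k+1) - 1 by omega]
      exact hodd (k+1) (by omega) (by omega)
  refine ⟨?_, ?_, ?_, ?_, ?_⟩
  · -- (i)
    intro i hi1 hi2
    rcases hform i hi1 hi2 with ⟨k, hk1, hkd, hik, hσ⟩ | ⟨k, hk1, hkd, hik, hσ⟩
    · have hσ' : σ (i+1) = tau (2*m+1) (m+1) k := by
        rw [show i + 1 = 2*k by omega]; exact heven k hk1 hkd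
      rw [hσ, hσ']
      have hd := disagree_card (d := 2*m+1) m k (m+1) k
      have h1 := disagree_L1 (d := 2*m+1) (m := m) (k := k) rfl
      omega
    · have hσ' : σ (i+1) = tau (2*m+1) m (k+1) := by
        rcases Nat.lt_or_ge k (2*m+1) with h | h
        · rw [show i + 1 = 2*(k+1) - 1 by omega]; exact hodd (k+1) (by omega) (by omega)
        · have hk : k = 2*m+1 := by omega
          subst hk
          rw [show i + 1 = 1 + 2*(2*m+1) by omega, hper 1]
          have h1 := hodd 1 (by omega) (by omega)
          norm_num at h1
          rw [h1]
          apply tau_congr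
          rw [show (2*m+1+1) = (2*m+1) + 1 from rfl, Nat.cast_add, ZMod.natCast_self,
            Nat.cast_one, zero_add]
      rw [hσ, hσ']
      have hd := disagree_card (d := 2*m+1) (m+1) k m (k+1)
      have h1 := disagree_L2 (d := 2*m+1) (m := m) (k := k) rfl hm
      omega
  · -- (ii)
    intro i hi1 hi2
    rcases hform i hi1 hi2 with ⟨k, hk1, hkd, hik, hσ⟩ | ⟨k, hk1, hkd, hik, hσ⟩
    · rw [hσ, image_alpha_tau m k (by omega) (by omega), show 2*m+1 - m = m+1 by omega]
      rcases le_or_gt (k + m) (2*m+1) with h | h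
      · rw [show i + (2*m+1) = 2*(k+m) by omega]
        exact heven (k+m) (by omega) h
      · rw [show i + (2*m+1) = 2*(k+m-(2*m+1)) + 2*(2*m+1) by omega, hper]
        rw [heven (k+m-(2*m+1)) (by omega) (by omega)]
        apply tau_congr
        have hle : (2*m+1) ≤ k + m := by omega
        rw [Nat.cast_sub hle, ZMod.natCast_self, sub_zero]
    · rw [hσ, image_alpha_tau (m+1) k (by omega) (by omega),
        show 2*m+1 - (m+1) = m by omega]
      rcases le_or_gt (k+m+1) (2*m+1) with h | h
      · rw [show i + (2*m+1) = 2*(k+(m+1)) - 1 by omega]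
        exact hodd (k+(m+1)) (by omega) (by omega)
      · rw [show i + (2*m+1) = (2*(k+m+1-(2*m+1)) - 1) + 2*(2*m+1) by omega, hper]
        rw [hodd (k+m+1-(2*m+1)) (by omega) (by omega)]
        apply tau_congr
        have hle : (2*m+1) ≤ k+m+1 := by omega
        rw [Nat.cast_sub hle, ZMod.natCast_self, sub_zero]
        have harg : k+m+1 = k+(m+1) := by omega
        rw [harg]
  · -- (iii) injectivity
    intro i j hi1 hi2 hj1 hj2 hσij
    rcases hform i hi1 hi2 with ⟨k1, hk11, hk1d, hik, hσ1⟩ | ⟨k1, hk11, hk1d, hik, hσ1⟩ <;>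
      rcases hform j hj1 hj2 with ⟨k2, hk21, hk2d, hjk, hσ2⟩ | ⟨k2, hk21, hk2d, hjk, hσ2⟩
    · rw [hσ1, hσ2] at hσij
      have hgg := tau_eq_iff.mp hσij
      have hc := cast_eq_of_gfun_eq (by omega) (by omega) hgg
      have := natCast_inj_Icc hk11 hk1d hk21 hk2d hc
      omega
    · exfalso
      rw [hσ1, hσ2] at hσij
      have hgg := tau_eq_iff.mp hσij
      have hA : (univ.filter fun a : ZMod (2*m+1) => gfun (2*m+1) m k1 a = true).card = m :=
        card_gfun_true (by omega)
      have hB : (univ.filter fun a : ZMod (2*m+1) =>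
          gfun (2*m+1) (m+1) k2 a = true).card = m+1 := card_gfun_true (by omega)
      have heq : (univ.filter fun a : ZMod (2*m+1) => gfun (2*m+1) m k1 a = true)
          = (univ.filter fun a : ZMod (2*m+1) => gfun (2*m+1) (m+1) k2 a = true) := by
        apply Finset.filter_congr
        intro a _
        rw [hgg a]
      rw [heq] at hA
      omega
    · exfalso
      rw [hσ1, hσ2] at hσij
      have hgg := tau_eq_iff.mp hσij
      have hA : (univ.filter fun a : ZMod (2*m+1) =>
          gfun (2*m+1) (m+1) k1 a = true).card = m+1 := card_gfun_true (by omega)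
      have hB : (univ.filter fun a : ZMod (2*m+1) => gfun (2*m+1) m k2 a = true).card = m :=
        card_gfun_true (by omega)
      have heq : (univ.filter fun a : ZMod (2*m+1) => gfun (2*m+1) (m+1) k1 a = true)
          = (univ.filter fun a : ZMod (2*m+1) => gfun (2*m+1) m k2 a = true) := by
        apply Finset.filter_congr
        intro a _
        rw [hgg a]
      rw [heq] at hA
      omega
    · rw [hσ1, hσ2] at hσij
      have hgg := tau_eq_iff.mp hσij
      have hc := cast_eq_of_gfun_eq (by omega : 1 ≤ m+1) (by omega) hgg
      have := natCast_inj_Icc hk11 hk1d hk21 hk2d hc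
      omega
  · -- (iii') facets
    intro F
    constructor
    · rintro ⟨i, hi1, hi2, rfl⟩
      rcases hform i hi1 hi2 with ⟨k, hk1, hkd, hik, hσ⟩ | ⟨k, hk1, hkd, hik, hσ⟩
      · rw [hσ]
        refine ⟨Or.inl ⟨k, hk1, hkd, Finset.Subset.refl _⟩, ?_⟩
        intro G hG hFG
        have hGsub : ∃ j' k', G ⊆ tau (2*m+1) j' k' := by
          rcases hG with ⟨k', _, _, h⟩ | ⟨k', _, _, h⟩
          exacts [⟨m, k', h⟩, ⟨m+1, k', h⟩]
        obtain ⟨j', k', hGsub⟩ := hGsub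
        have h1 : tau (2*m+1) m k ⊆ tau (2*m+1) j' k' := hFG.trans hGsub
        have h2 : tau (2*m+1) m k = tau (2*m+1) j' k' :=
          Finset.eq_of_subset_of_card_le h1 (by rw [card_tau, card_tau])
        exact Finset.Subset.antisymm hFG (h2 ▸ hGsub)
      · rw [hσ]
        refine ⟨Or.inr ⟨k, hk1, hkd, Finset.Subset.refl _⟩, ?_⟩
        intro G hG hFG
        have hGsub : ∃ j' k', G ⊆ tau (2*m+1) j' k' := by
          rcases hG with ⟨k', _, _, h⟩ | ⟨k', _, _, h⟩
          exacts [⟨m, k', h⟩, ⟨m+1, k', h⟩]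
        obtain ⟨j', k', hGsub⟩ := hGsub
        have h1 : tau (2*m+1) (m+1) k ⊆ tau (2*m+1) j' k' := hFG.trans hGsub
        have h2 : tau (2*m+1) (m+1) k = tau (2*m+1) j' k' :=
          Finset.eq_of_subset_of_card_le h1 (by rw [card_tau, card_tau])
        exact Finset.Subset.antisymm hFG (h2 ▸ hGsub)
    · rintro ⟨hmem, hmax⟩
      rcases hmem with ⟨k', hk1, hkd, hsub⟩ | ⟨k', hk1, hkd, hsub⟩
      · have hF : F = tau (2*m+1) m k' :=
          hmax _ (Or.inl ⟨k', hk1, hkd, Finset.Subset.refl _⟩) hsub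
        exact ⟨2*k'-1, by omega, by omega, by rw [hF, ← hodd k' hk1 hkd]⟩
      · have hF : F = tau (2*m+1) (m+1) k' :=
          hmax _ (Or.inr ⟨k', hk1, hkd, Finset.Subset.refl _⟩) hsub
        exact ⟨2*k', by omega, by omega, by rw [hF, ← heven k' hk1 hkd]⟩
  · -- (iv)
    intro i j hi1 hi2 hj1 hj2 hne hcard
    rcases hform i hi1 hi2 with ⟨k1, hk11, hk1d, hik, hσ1⟩ | ⟨k1, hk11, hk1d, hik, hσ1⟩ <;>
      rcases hform j hj1 hj2 with ⟨k2, hk21, hk2d, hjk, hσ2⟩ | ⟨k2, hk21, hk2d, hjk, hσ2⟩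
    · exfalso
      rw [hσ1, hσ2] at hcard
      have hdc := disagree_card (d := 2*m+1) m k1 m k2
      have hD : (univ.filter fun a : ZMod (2*m+1) =>
          ¬ (gfun (2*m+1) m k1 a = gfun (2*m+1) m k2 a)).card = 1 := by omega
      exact disagree_card_even
        (by rw [card_gfun_true (by omega), card_gfun_true (by omega)]) hD
    · -- i odd, j even
      rw [hσ1, hσ2] at hcard
      have hdc := disagree_card (d := 2*m+1) m k1 (m+1) k2
      have hD : (univ.filter fun a : ZMod (2*m+1) =>
          ¬ (gfun (2*m+1) m k1 a = gfun (2*m+1) (m+1) k2 a)).card = 1 := by omega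
      rcases subset_of_disagree_one rfl hm hD with hc | hc
      · have hkk := natCast_inj_Icc hk11 hk1d hk21 hk2d hc
        left
        rw [show j = i+1 by omega]
      · rcases Nat.lt_or_ge k2 (2*m+1) with h | h
        · have hcast : (k1 : ZMod (2*m+1)) = ((k2+1 : ℕ) : ZMod (2*m+1)) := by
            rw [hc]; push_cast; ring
          have hkk := natCast_inj_Icc hk11 hk1d (by omega) (by omega) hcast
          right
          rw [show i = j+1 by omega]
        · have hk2 : k2 = 2*m+1 := by omega
          subst hk2
          have hone : (k1 : ZMod (2*m+1)) = ((1 : ℕ) : ZMod (2*m+1)) := by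
            rw [hc, ZMod.natCast_self, zero_add, Nat.cast_one]
          have hkk := natCast_inj_Icc hk11 hk1d (by omega) (by omega) hone
          right
          rw [show i = 1 by omega, show j + 1 = 2*(2*m+1) + 1 by omega, Nat.add_mod_left]
    · -- i even, j odd
      rw [hσ1, hσ2] at hcard
      have hdc2 := disagree_card (d := 2*m+1) m k2 (m+1) k1
      rw [Finset.inter_comm] at hdc2
      have hD' : (univ.filter fun a : ZMod (2*m+1) =>
          ¬ (gfun (2*m+1) m k2 a = gfun (2*m+1) (m+1) k1 a)).card = 1 := by omega
      rcases subset_of_disagree_one rfl hm hD' with hc | hc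
      · have hkk := natCast_inj_Icc hk21 hk2d hk11 hk1d hc
        right
        rw [show i = j+1 by omega]
      · rcases Nat.lt_or_ge k1 (2*m+1) with h | h
        · have hcast : (k2 : ZMod (2*m+1)) = ((k1+1 : ℕ) : ZMod (2*m+1)) := by
            rw [hc]; push_cast; ring
          have hkk := natCast_inj_Icc hk21 hk2d (by omega) (by omega) hcast
          left
          rw [show j = i+1 by omega]
        · have hk1' : k1 = 2*m+1 := by omega
          subst hk1'
          have hone : (k2 : ZMod (2*m+1)) = ((1 : ℕ) : ZMod (2*m+1)) := by
            rw [hc, ZMod.natCast_self, zero_add, Nat.cast_one]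
          have hkk := natCast_inj_Icc hk21 hk2d (by omega) (by omega) hone
          left
          rw [show j = 1 by omega, show i + 1 = 2*(2*m+1) + 1 by omega, Nat.add_mod_left]
    · exfalso
      rw [hσ1, hσ2] at hcard
      have hdc := disagree_card (d := 2*m+1) (m+1) k1 (m+1) k2
      have hD : (univ.filter fun a : ZMod (2*m+1) =>
          ¬ (gfun (2*m+1) (m+1) k1 a = gfun (2*m+1) (m+1) k2 a)).card = 1 := by omega
      exact disagree_card_even
        (by rw [card_gfun_true (by omega), card_gfun_true (by omega)]) hD

end SpherePaper
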